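/- arXiv:1504.00137 — 8 statements merged into one kernel-verified Lean document; each statement's English description precedes it below -/
import Mathlib

section
/- Let A be an L^{(r)}_{ℓ₁,…,ℓ_r}-free subset of an abelian group G, where r ≥ 2 and 2 ≤ ℓ₁ ≤ ⋯ ≤ ℓ_r. Then for any ℓ₁ distinct elements x₁,…,x_{ℓ₁} of G, the set (A + x₁) ∩ ⋯ ∩ (A + x_{ℓ₁}) is L^{(r-1)}_{ℓ₂,…,ℓ_r}-free. -/
open Pointwise

/-- `A ⊆ G` is `L^{(r)}_{ℓ₁,…,ℓ_r}`-free: `A` contains no sumset `L₁ + ⋯ + L_r`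
with `|L i| = ℓ i` for each `i`. -/
def LFree {G : Type*} [AddCommGroup G] [DecidableEq G] (r : ℕ) (ℓ : Fin r → ℕ)
    (A : Set G) : Prop :=
  ∀ L : Fin r → Finset G, (∀ i, (L i).card = ℓ i) → ¬ ((↑(∑ i, L i) : Set G) ⊆ A)

/-- if `A` is `L^{(r)}_{ℓ₁,…,ℓ_r}`-free (here `r = n + 1 ≥ 2`), then for
any `ℓ₁` distinct elements `x₁,…,x_{ℓ₁}` the intersection of translates
`(A + x₁) ∩ ⋯ ∩ (A + x_{ℓ₁})` is `L^{(r-1)}_{ℓ₂,…,ℓ_r}`-free. -/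
theorem stmt1 {G : Type*} [AddCommGroup G] [DecidableEq G] (n : ℕ) (hn : 1 ≤ n)
    (ℓ : Fin (n + 1) → ℕ) (hℓ : ∀ i, 2 ≤ ℓ i) (hmono : Monotone ℓ)
    (A : Set G) (hA : LFree (n + 1) ℓ A)
    (x : Fin (ℓ 0) → G) (hx : Function.Injective x) :
    LFree n (fun i => ℓ i.succ) (⋂ i, (fun a => a + x i) '' A) := by
  intro L hL hsub
  refine hA (Fin.cons (Finset.univ.image fun j => -x j) L) ?_ ?_
  · intro i
    refine Fin.cases ?_ (fun j => ?_) i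
    · rw [Fin.cons_zero, Finset.card_image_of_injective _ (fun a b h => hx (neg_injective h)), Finset.card_univ, Fintype.card_fin]
    · rw [Fin.cons_succ]; exact hL j
  · rw [Fin.sum_cons]
    intro s hs
    rw [Finset.mem_coe, Finset.mem_add] at hs
    obtain ⟨a, ha, b, hb, rfl⟩ := hs
    simp only [Finset.mem_image, Finset.mem_univ, true_and] at ha
    obtain ⟨j, rfl⟩ := ha
    have hb' := hsub (Finset.mem_coe.2 hb)
    rw [Set.mem_iInter] at hb'
    obtain ⟨c, hc, hcb⟩ := hb' j
    have : -x j + b = c := by rw [← hcb]; simp only []; rw [add_comm c (x j), neg_add_cancel_left]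
    rw [this]; exact hc
end

section
/- If a sumset L₁ + ⋯ + L_r of finite nonempty sets in an abelian group is degenerate, i.e. |L₁ + ⋯ + L_r| < |L₁|⋯|L_r|, then L₁ + ⋯ + L_r contains a three-term arithmetic progression with nonzero common difference. -/
open Pointwise

open Pointwise in
lemma sum_mem_finset_sum {ι G : Type*} [AddCommMonoid G] [DecidableEq G]
    (s : Finset ι) (f : ι → G) (t : ι → Finset G) (h : ∀ i ∈ s, f i ∈ t i) :
    ∑ i ∈ s, f i ∈ ∑ i ∈ s, t i := by
  classical
  induction s using Finset.cons_induction with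
  | empty => simp
  | cons a s ha ih =>
    rw [Finset.sum_cons, Finset.sum_cons]
    exact Finset.add_mem_add (h a (Finset.mem_cons_self a s))
      (ih fun i hi => h i (Finset.mem_cons_of_mem hi))

/-- a degenerate sumset `L₁ + ⋯ + L_r` (one with
`|L₁ + ⋯ + L_r| < |L₁|⋯|L_r|`) contains a three-term arithmetic progression
with nonzero common difference. -/
theorem stmt2 {G : Type*} [AddCommGroup G] [DecidableEq G] (r : ℕ)
    (L : Fin r → Finset G) (hL : ∀ i, (L i).Nonempty)
    (hdeg : (∑ i, L i).card < ∏ i, (L i).card) :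
    ∃ a d : G, d ≠ 0 ∧ a ∈ ∑ i, L i ∧ a + d ∈ ∑ i, L i ∧ a + d + d ∈ ∑ i, L i := by
  have key : ¬ Function.Injective (fun (f : ∀ i, L i) => ∑ i, (f i : G)) := by
    intro hinj
    have h1 : (Finset.univ.image (fun (f : ∀ i, L i) => ∑ i, (f i : G))).card
        = ∏ i, (L i).card := by
      rw [Finset.card_image_of_injective _ hinj, Finset.card_univ, Fintype.card_pi]
      simp [Fintype.card_coe]
    have h2 : Finset.univ.image (fun (f : ∀ i, L i) => ∑ i, (f i : G)) ⊆ ∑ i, L i := by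
      intro x hx
      simp only [Finset.mem_image, Finset.mem_univ, true_and] at hx
      obtain ⟨f, rfl⟩ := hx
      exact sum_mem_finset_sum _ _ _ (fun i _ => (f i).2)
    exact absurd hdeg (not_lt.mpr (h1 ▸ Finset.card_le_card h2))
  rw [Function.not_injective_iff] at key
  obtain ⟨f, g, hfg, hne⟩ := key
  obtain ⟨j, hj⟩ : ∃ j, (f j : G) ≠ (g j : G) := by
    by_contra h
    push_neg at h
    exact hne (funext fun i => Subtype.ext (h i))
  set F : Fin r → G := fun i => (f i : G) with hF
  set Gg : Fin r → G := fun i => (g i : G) with hG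
  have hFmem : ∀ i, F i ∈ L i := fun i => (f i).2
  have hGmem : ∀ i, Gg i ∈ L i := fun i => (g i).2
  have hS : ∑ i, F i = ∑ i, Gg i := hfg
  -- sums with one coordinate swapped
  have hupd : ∀ (H : Fin r → G) (b : G),
      ∑ i, Function.update H j b i = b + (∑ i ∈ Finset.univ.erase j, H i) := by
    intro H b
    rw [Finset.sum_update_of_mem (Finset.mem_univ j)]
    congr 1
    simp [Finset.sdiff_singleton_eq_erase]
  have hsplit : ∀ (H : Fin r → G), ∑ i, H i = H j + ∑ i ∈ Finset.univ.erase j, H i := by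
    intro H
    exact (Finset.add_sum_erase _ H (Finset.mem_univ j)).symm
  refine ⟨∑ i, Function.update F j (Gg j) i, F j - Gg j, sub_ne_zero.mpr hj, ?_, ?_, ?_⟩
  · exact sum_mem_finset_sum _ _ _ (fun i _ => by
      rcases eq_or_ne i j with rfl | h
      · simpa using hGmem i
      · simpa [Function.update_of_ne h] using hFmem i)
  · have : (∑ i, Function.update F j (Gg j) i) + (F j - Gg j) = ∑ i, F i := by
      rw [hupd, hsplit F]; abel
    rw [this]
    exact sum_mem_finset_sum _ _ _ (fun i _ => hFmem i)
  · have : (∑ i, Function.update F j (Gg j) i) + (F j - Gg j) + (F j - Gg j)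
        = ∑ i, Function.update Gg j (F j) i := by
      have hS' : F j + ∑ i ∈ Finset.univ.erase j, F i
          = Gg j + ∑ i ∈ Finset.univ.erase j, Gg i := by
        rw [← hsplit F, ← hsplit Gg]; exact hS
      have h3 : ∑ i ∈ Finset.univ.erase j, F i
          = Gg j + ∑ i ∈ Finset.univ.erase j, Gg i - F j := by
        rw [← hS']; abel
      rw [hupd, hupd, h3]; abel
    rw [this]
    exact sum_mem_finset_sum _ _ _ (fun i _ => by
      rcases eq_or_ne i j with rfl | h
      · simpa using hFmem i
      · simpa [Function.update_of_ne h] using hGmem i)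
end

section
/- Let F(n, L^{(r)}_{ℓ₁,…,ℓ_r}) denote the largest cardinality of an L^{(r)}_{ℓ₁,…,ℓ_r}-free subset of {1,…,n}. For r ≥ 2 and 2 ≤ ℓ₁ ≤ ⋯ ≤ ℓ_r, writing F_r = F(n, L^{(r)}_{ℓ₁,…,ℓ_r}) and F_{r−1} = F(n, L^{(r−1)}_{ℓ₂,…,ℓ_r}), one has F_r < (2n)^{1−1/ℓ₁} · F_{r−1}^{1/ℓ₁} + 2ℓ₁. -/
/-!
Let `A ⊆ {1,…,n}` be an extremal `L^{(r)}`-free set and `l = ℓ₁`. An `l`-subset `S ⊆ A` is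
determined by its minimum `x` and its pattern `P = S - x`, an `l`-subset of `[0, n-1]`
containing `0`. For a fixed pattern `P`, the set `B` of all `x ∈ A` with `P + x ⊆ A` is
`L^{(r-1)}_{ℓ₂,…,ℓ_r}`-free, since `P + L₂ + ⋯ + L_r ⊆ A` would be forbidden; so `|B| ≤ F_{r-1}`.
Hence `C(F_r, l) ≤ C(n-1, l-1) F_{r-1}`, and with `(F_r + 1 - l)^l ≤ l! C(F_r, l)` and
`l! C(n-1, l-1) ≤ l n^{l-1} ≤ (2n)^{l-1}` this gives
`F_r + 1 - l ≤ (2n)^{1-1/l} F_{r-1}^{1/l}`.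
-/

open Pointwise

/-- `F(n, L^{(r)}_{ℓ₁,…,ℓ_r})`: largest size of an `L^{(r)}_{ℓ₁,…,ℓ_r}`-free subset
of `{1,…,n}`. -/
noncomputable def Ffin (n r : ℕ) (ℓ : Fin r → ℕ) : ℕ :=
  sSup {k | ∃ A : Finset ℤ, (↑A : Set ℤ) ⊆ Set.Icc (1 : ℤ) n ∧ LFree r ℓ (A : Set ℤ) ∧ A.card = k}

open Finset
open scoped Nat

lemma lFree_empty {G : Type*} [AddCommGroup G] [DecidableEq G] (r : ℕ) (ℓ : Fin r → ℕ)
    (hℓ : ∀ i, 1 ≤ ℓ i) : LFree r ℓ (∅ : Set G) := by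
  intro L hL hsub
  choose g hg using fun i => card_pos.mp ((hℓ i).trans_eq (hL i).symm)
  have hmem : ∑ i, g i ∈ ((∑ i, L i : Finset G) : Set G) := by
    rw [coe_sum]
    exact (Set.mem_fintype_sum _ _).mpr ⟨g, hg, rfl⟩
  exact hsub hmem

lemma LFree.tail {G : Type*} [AddCommGroup G] [DecidableEq G] {r : ℕ} {ℓ : Fin (r + 1) → ℕ}
    {A B : Set G} (hA : LFree (r + 1) ℓ A) {P : Finset G} (hP : #P = ℓ 0)
    (hPB : (P : Set G) + B ⊆ A) : LFree r (Fin.tail ℓ) B := by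
  intro L hL hLB
  refine hA (Fin.cons P L) (Fin.cases hP hL) ?_
  rw [Fin.sum_cons, coe_add]
  exact (Set.add_subset_add_left hLB).trans hPB

lemma bddAbove_ffin_set (n r : ℕ) (ℓ : Fin r → ℕ) :
    BddAbove {k | ∃ A : Finset ℤ, (A : Set ℤ) ⊆ Set.Icc 1 n ∧ LFree r ℓ (A : Set ℤ) ∧ #A = k} := by
  refine ⟨n, ?_⟩
  rintro k ⟨A, hA, -, rfl⟩
  calc #A ≤ #(Icc (1 : ℤ) n) := card_le_card (by rwa [← coe_subset, coe_Icc])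
    _ = n := by simp

section Ffin

variable {n r : ℕ} {ℓ : Fin r → ℕ}

lemma card_le_ffin {A : Finset ℤ} (hA : (A : Set ℤ) ⊆ Set.Icc 1 n) (hfree : LFree r ℓ (A : Set ℤ)) :
    #A ≤ Ffin n r ℓ :=
  le_csSup (bddAbove_ffin_set n r ℓ) ⟨A, hA, hfree, rfl⟩

lemma exists_card_eq_ffin (hℓ : ∀ i, 1 ≤ ℓ i) :
    ∃ A : Finset ℤ, (A : Set ℤ) ⊆ Set.Icc 1 n ∧ LFree r ℓ (A : Set ℤ) ∧ #A = Ffin n r ℓ := by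
  refine Nat.sSup_mem ?_ (bddAbove_ffin_set n r ℓ)
  exact ⟨0, ∅, by simp, by simpa using lFree_empty r ℓ hℓ, rfl⟩

end Ffin

lemma choose_card_le_mul_of_add_subset {n l M : ℕ} {A : Finset ℤ} (hA : (A : Set ℤ) ⊆ Set.Icc 1 n)
    (hl : 1 ≤ l) (hM : ∀ P : Finset ℤ, #P = l → ∀ B ⊆ A, (P : Set ℤ) + B ⊆ A → #B ≤ M) :
    (#A).choose l ≤ (n - 1).choose (l - 1) * M := by
  obtain rfl | hn := Nat.eq_zero_or_pos n
  · have : A = ∅ := by simpa [← coe_subset] using hA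
    simp [this, Nat.choose_eq_zero_of_lt hl]
  have hAIcc : ∀ x ∈ A, 1 ≤ x ∧ x ≤ n := fun x hx => hA hx
  set patterns := {P ∈ (Icc (0 : ℤ) (n - 1)).powersetCard l | {0} ⊆ P}
  set B : Finset ℤ → Finset ℤ := fun P => {x ∈ A | ∀ a ∈ P, a + x ∈ A}
  have hPB : ∀ P : Finset ℤ, (P : Set ℤ) + (B P : Set ℤ) ⊆ A := by
    rintro P _ ⟨a, ha, x, hx, rfl⟩
    exact (mem_filter.mp hx).2 a ha
  have hcover : Set.SurjOn (fun p : Σ _ : Finset ℤ, ℤ => p.1.image (· + p.2))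
      (patterns.sigma B) (A.powersetCard l) := by
    intro S hS
    obtain ⟨hSA, hScard⟩ := mem_powersetCard.mp hS
    have hSne : S.Nonempty := card_pos.mp (by omega)
    set x := S.min' hSne
    have hxS : x ∈ S := S.min'_mem hSne
    refine ⟨⟨S.image (· - x), x⟩, mem_sigma.mpr ⟨?_, ?_⟩, ?_⟩
    · simp only [patterns, mem_filter, mem_powersetCard, singleton_subset_iff]
      refine ⟨⟨fun a ha => ?_, ?_⟩, mem_image.mpr ⟨x, hxS, sub_self x⟩⟩
      · obtain ⟨s, hs, rfl⟩ := mem_image.mp ha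
        have := S.min'_le s hs
        have := hAIcc s (hSA hs)
        have := hAIcc x (hSA hxS)
        simp only [mem_Icc]
        omega
      · rw [card_image_of_injective _ sub_left_injective, hScard]
    · refine mem_filter.mpr ⟨hSA hxS, fun a ha => ?_⟩
      obtain ⟨s, hs, rfl⟩ := mem_image.mp ha
      simpa using hSA hs
    · simp [image_image, Function.comp_def]
  have hpatterns : #patterns = (n - 1).choose (l - 1) := by
    rw [card_filter_powersetCard_subset _ _ _ (by simp; omega) (by simpa using hl)]
    simp
  calc (#A).choose l = #(A.powersetCard l) := (card_powersetCard l A).symm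
    _ ≤ #(patterns.sigma B) := card_le_card_of_surjOn _ hcover
    _ = ∑ P ∈ patterns, #(B P) := card_sigma _ _
    _ ≤ #patterns * M := by
      refine sum_le_card_nsmul _ _ _ fun P hP => hM P ?_ (B P) (filter_subset _ _) (hPB P)
      exact (mem_powersetCard.mp (mem_filter.mp hP).1).2
    _ = (n - 1).choose (l - 1) * M := by rw [hpatterns]

lemma factorial_mul_choose_pred_le (n : ℕ) {l : ℕ} (hl : 1 ≤ l) :
    l ! * (n - 1).choose (l - 1) ≤ (2 * n) ^ (l - 1) := by
  obtain ⟨k, rfl⟩ := Nat.exists_eq_add_of_le' hl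
  calc (k + 1)! * (n - 1).choose k = (k + 1) * (n - 1).descFactorial k := by
        rw [Nat.factorial_succ, mul_assoc, Nat.descFactorial_eq_factorial_mul_choose]
    _ ≤ 2 ^ k * n ^ k := Nat.mul_le_mul Nat.lt_two_pow_self
        ((Nat.descFactorial_le_pow _ _).trans (Nat.pow_le_pow_left (Nat.sub_le n 1) _))
    _ = (2 * n) ^ (k + 1 - 1) := by rw [Nat.add_sub_cancel, mul_pow]

lemma add_one_sub_pow_le_of_choose_le {F n l M : ℕ} (hl : 1 ≤ l)
    (h : F.choose l ≤ (n - 1).choose (l - 1) * M) : (F + 1 - l) ^ l ≤ (2 * n) ^ (l - 1) * M :=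
  calc (F + 1 - l) ^ l ≤ F.descFactorial l := Nat.pow_sub_le_descFactorial F l
    _ = l ! * F.choose l := Nat.descFactorial_eq_factorial_mul_choose F l
    _ ≤ l ! * ((n - 1).choose (l - 1) * M) := Nat.mul_le_mul_left _ h
    _ ≤ (2 * n) ^ (l - 1) * M := by
      rw [← mul_assoc]; exact Nat.mul_le_mul_right _ (factorial_mul_choose_pred_le n hl)

lemma Real.le_rpow_mul_rpow_of_pow_le {x c y : ℝ} {l : ℕ} (hx : 0 ≤ x) (hc : 0 ≤ c)
    (hy : 0 ≤ y) (hl : 1 ≤ l) (h : x ^ l ≤ c ^ (l - 1) * y) :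
    x ≤ c ^ (1 - 1 / (l : ℝ)) * y ^ (1 / (l : ℝ)) := by
  have hlpos : (0 : ℝ) < l := by exact_mod_cast hl
  have hexp : ((l - 1 : ℕ) : ℝ) * (l : ℝ)⁻¹ = 1 - 1 / (l : ℝ) := by
    rw [Nat.cast_sub hl]; field_simp; simp
  calc x ≤ (c ^ (l - 1) * y) ^ (l : ℝ)⁻¹ :=
        (Real.le_rpow_inv_iff_of_pos hx (by positivity) hlpos).mpr (by rwa [Real.rpow_natCast])
    _ = c ^ (1 - 1 / (l : ℝ)) * y ^ (1 / (l : ℝ)) := by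
      rw [Real.mul_rpow (by positivity) hy, ← Real.rpow_natCast, ← Real.rpow_mul hc, hexp,
        one_div]

theorem stmt6_general (n m : ℕ) (ℓ : Fin (m + 2) → ℕ) (hℓ : ∀ i, 2 ≤ ℓ i) :
    (Ffin n (m + 2) ℓ : ℝ)
      < (2 * n : ℝ) ^ (1 - 1 / (ℓ 0 : ℝ)) *
          (Ffin n (m + 1) (fun i => ℓ i.succ) : ℝ) ^ (1 / (ℓ 0 : ℝ))
        + 2 * (ℓ 0 : ℝ) := by
  set l := ℓ 0
  set F' := Ffin n (m + 1) (fun i => ℓ i.succ)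
  have hl : 1 ≤ l := one_le_two.trans (hℓ 0)
  obtain ⟨A, hAn, hAfree, hAcard⟩ := exists_card_eq_ffin (fun i => one_le_two.trans (hℓ i))
  have hchoose : (#A).choose l ≤ (n - 1).choose (l - 1) * F' :=
    choose_card_le_mul_of_add_subset hAn hl fun P hP B hBA hPB =>
      card_le_ffin ((coe_subset.mpr hBA).trans hAn) (hAfree.tail hP hPB)
  have hpow := add_one_sub_pow_le_of_choose_le hl hchoose
  have hroot : ((#A + 1 - l : ℕ) : ℝ) ≤ (2 * n : ℝ) ^ (1 - 1 / (l : ℝ)) * (F' : ℝ) ^ (1 / (l : ℝ)) :=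
    Real.le_rpow_mul_rpow_of_pow_le (by positivity) (by positivity) (by positivity) hl
      (by exact_mod_cast hpow)
  have hsub : (#A : ℝ) + 1 ≤ ((#A + 1 - l : ℕ) : ℝ) + l := by
    exact_mod_cast (by omega : #A + 1 ≤ #A + 1 - l + l)
  rw [← hAcard]
  linarith [(Nat.one_le_cast (α := ℝ)).mpr hl]

/-- with `F_r = F(n, L^{(r)}_{ℓ₁,…,ℓ_r})` and
`F_{r-1} = F(n, L^{(r-1)}_{ℓ₂,…,ℓ_r})` (here the number of summands is `m + 2 ≥ 2`),
one has `F_r < (2n)^{1−1/ℓ₁} F_{r-1}^{1/ℓ₁} + 2 ℓ₁`. -/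
theorem stmt6 (n m : ℕ) (ℓ : Fin (m + 2) → ℕ) (hℓ : ∀ i, 2 ≤ ℓ i) (hmono : Monotone ℓ) :
    (Ffin n (m + 2) ℓ : ℝ)
      < (2 * n : ℝ) ^ (1 - 1 / (ℓ 0 : ℝ)) *
          (Ffin n (m + 1) (fun i => ℓ i.succ) : ℝ) ^ (1 / (ℓ 0 : ℝ))
        + 2 * (ℓ 0 : ℝ) :=
  stmt6_general n m ℓ hℓ
end

section
/- For every r ≥ 2 and 2 ≤ ℓ₁ ≤ ⋯ ≤ ℓ_r there is a constant C (depending only on r and the ℓᵢ) such that F(n, L^{(r)}_{ℓ₁,…,ℓ_r}) ≤ C · n^{1 − 1/(ℓ₁⋯ℓ_{r−1})} for all n ≥ 1. -/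
open Pointwise

/-!
Induction on the number `r` of summands; for `r = 1` a free set has fewer than `ℓ₁` elements.
For `A ⊆ [1, n]` free of `L^{(r)}_{ℓ₁,…,ℓ_r}`, write each `ℓ₁`-subset `T` of `A` as `min T + S`,
where the shape `S ∋ 0` is one of at most `n^{ℓ₁ - 1}` subsets of `[0, n)`. For a fixed shape `S`
the set `{t ∈ A | t + S ⊆ A}` is `L^{(r-1)}_{ℓ₂,…,ℓ_r}`-free, because adding `S` to a sumset inside
it gives a sumset inside `A`. Hence `binom(|A|, ℓ₁) ≤ n^{ℓ₁ - 1} · C' n^{1 - 1/(ℓ₂⋯ℓ_{r-1})}`,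
and taking `ℓ₁`-th roots gives `|A| ≤ C n^{1 - 1/(ℓ₁⋯ℓ_{r-1})}`.
-/

open Finset
open scoped Nat

section LFree

variable {G : Type*} [AddCommGroup G] [DecidableEq G]

def shiftsInto (S A : Finset G) : Finset G := {t ∈ A | t +ᵥ S ⊆ A}

theorem LFree.ne_zero [Infinite G] {r : ℕ} {ℓ : Fin r → ℕ} {A : Set G} (hA : LFree r ℓ A)
    (i : Fin r) : ℓ i ≠ 0 := by
  intro hi
  choose L hL using fun j => Infinite.exists_subset_card_eq G (ℓ j)
  refine hA L hL ?_
  have hLi : L i = ∅ := card_eq_zero.1 ((hL i).trans hi)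
  rw [← add_sum_erase _ _ (mem_univ i), hLi, empty_add, coe_empty]
  exact Set.empty_subset A

theorem LFree.card_lt {ℓ : Fin 1 → ℕ} {A : Finset G} (hA : LFree 1 ℓ (A : Set G)) :
    #A < ℓ 0 := by
  by_contra! h
  obtain ⟨T, hTA, hT⟩ := exists_subset_card_eq h
  exact hA (fun _ => T) (fun i => by rwa [Fin.fin_one_eq_zero i]) (by simpa using hTA)

theorem LFree.shiftsInto {r : ℕ} {ℓ : Fin (r + 1) → ℕ} {A S : Finset G}
    (hA : LFree (r + 1) ℓ (A : Set G)) (hS : #S = ℓ 0) :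
    LFree r (fun i => ℓ i.succ) (shiftsInto S A : Set G) := by
  intro L hL hsub
  refine hA (Fin.cons S L) (Fin.cases hS hL) ?_
  rw [Fin.sum_cons]
  intro x hx
  obtain ⟨s, hs, t, ht, rfl⟩ := mem_add.1 (mem_coe.1 hx)
  have htS : t +ᵥ S ⊆ A := (mem_filter.1 (mem_coe.1 (hsub (mem_coe.2 ht)))).2
  rw [add_comm]
  exact htS (vadd_mem_vadd_finset hs)

end LFree

theorem powersetCard_subset_biUnion_shiftsInto {A : Finset ℤ} {n Q : ℕ}
    (hA : (A : Set ℤ) ⊆ Set.Icc 1 n) :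
    A.powersetCard (Q + 1) ⊆ ((Icc (1 : ℤ) (n - 1)).powersetCard Q).biUnion
      fun U => (shiftsInto (insert 0 U) A).image (· +ᵥ insert 0 U) := by
  intro T hT
  obtain ⟨hTA, hTcard⟩ := mem_powersetCard.1 hT
  have hTne : T.Nonempty := card_pos.1 (by omega)
  set t := T.min' hTne
  set S := -t +ᵥ T with hS
  have h0 : (0 : ℤ) ∈ S := mem_vadd_finset.2 ⟨t, T.min'_mem hTne, neg_add_cancel t⟩
  have hTS : t +ᵥ S = T := by rw [hS, vadd_vadd, add_neg_cancel, zero_vadd]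
  simp only [mem_biUnion, mem_image, mem_powersetCard]
  refine ⟨S.erase 0, ⟨?_, ?_⟩, t, ?_, ?_⟩
  · intro y hy
    obtain ⟨hy0, hyS⟩ := mem_erase.1 hy
    obtain ⟨x, hx, rfl⟩ := mem_vadd_finset.1 hyS
    have htx : t ≤ x := T.min'_le x hx
    have hxn : x ≤ n := (hA (hTA hx)).2
    have ht1 : 1 ≤ t := (hA (hTA (T.min'_mem hTne))).1
    rw [vadd_eq_add] at hy0 ⊢
    rw [mem_Icc]
    omega
  · rw [card_erase_of_mem h0, card_vadd_finset, hTcard, Nat.add_sub_cancel]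
  · rw [insert_erase h0]
    exact mem_filter.2 ⟨hTA (T.min'_mem hTne), hTS ▸ hTA⟩
  · rw [insert_erase h0, hTS]

theorem choose_card_le_mul_of_shiftsInto_le {A : Finset ℤ} {n Q : ℕ}
    (hA : (A : Set ℤ) ⊆ Set.Icc 1 n) {B : ℝ}
    (hB : ∀ S : Finset ℤ, #S = Q + 1 → (#(shiftsInto S A) : ℝ) ≤ B) :
    ((#A).choose (Q + 1) : ℝ) ≤ n ^ Q * B := by
  set 𝒰 := (Icc (1 : ℤ) (n - 1)).powersetCard Q
  have hB0 : 0 ≤ B := by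
    obtain ⟨S, hS⟩ := Infinite.exists_subset_card_eq ℤ (Q + 1)
    exact (Nat.cast_nonneg _).trans (hB S hS)
  have h𝒰 : (#𝒰 : ℝ) ≤ n ^ Q := by
    rw [card_powersetCard, Int.card_Icc]
    have hcard : ((n : ℤ) - 1 + 1 - 1).toNat ≤ n := by omega
    exact_mod_cast (Nat.choose_le_pow _ _).trans (Nat.pow_le_pow_left hcard _)
  calc ((#A).choose (Q + 1) : ℝ) = #(A.powersetCard (Q + 1)) := by rw [card_powersetCard]
    _ ≤ ∑ U ∈ 𝒰, (#(shiftsInto (insert 0 U) A) : ℝ) := by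
        exact_mod_cast (card_le_card (powersetCard_subset_biUnion_shiftsInto hA)).trans
          (card_biUnion_le.trans (sum_le_sum fun U _ => card_image_le))
    _ ≤ #𝒰 * B := by
        refine (sum_le_card_nsmul _ _ _ fun U hU => hB _ ?_).trans_eq (nsmul_eq_mul _ _)
        obtain ⟨hU, hUcard⟩ := mem_powersetCard.1 hU
        rw [card_insert_of_notMem (fun h0 => by simpa using hU h0), hUcard]
    _ ≤ n ^ Q * B := mul_le_mul_of_nonneg_right h𝒰 hB0

theorem le_rpow_inv_mul_rpow_of_pow_le {x K y e : ℝ} {Q : ℕ} (hx : 0 ≤ x) (hK : 0 ≤ K)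
    (hy : 0 ≤ y) (hQ : Q ≠ 0) (h : x ^ Q ≤ K * y ^ (Q * e)) : x ≤ K ^ (Q⁻¹ : ℝ) * y ^ e := by
  calc x = (x ^ Q) ^ (Q⁻¹ : ℝ) := (Real.pow_rpow_inv_natCast hx hQ).symm
    _ ≤ (K * y ^ (Q * e)) ^ (Q⁻¹ : ℝ) := Real.rpow_le_rpow (by positivity) h (by positivity)
    _ = K ^ (Q⁻¹ : ℝ) * y ^ e := by
      rw [Real.mul_rpow hK (by positivity), ← Real.rpow_mul hy, mul_comm (Q : ℝ),
        mul_inv_cancel_right₀ (by exact_mod_cast hQ)]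

theorem cast_le_of_choose_le {a Q : ℕ} {K y e : ℝ} (hK : 0 ≤ K) (hy : 1 ≤ y) (he : 0 ≤ e)
    (h : (a.choose (Q + 1) : ℝ) ≤ K * y ^ ((Q + 1 : ℕ) * e)) :
    (a : ℝ) ≤ ((Q + 1 : ℕ) + ((Q + 1)! * K) ^ ((Q + 1 : ℕ)⁻¹ : ℝ)) * y ^ e := by
  set x : ℕ := a + 1 - (Q + 1)
  have hx : (x : ℝ) ^ (Q + 1) ≤ ((Q + 1)! * K) * y ^ ((Q + 1 : ℕ) * e) :=
    calc (x : ℝ) ^ (Q + 1) ≤ (Q + 1)! * a.choose (Q + 1) :=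
          (div_le_iff₀' (by positivity)).1 (Nat.pow_le_choose _ _)
      _ ≤ (Q + 1)! * (K * y ^ ((Q + 1 : ℕ) * e)) := by gcongr
      _ = _ := by ring
  have hye : 1 ≤ y ^ e := Real.one_le_rpow hy he
  calc (a : ℝ) ≤ (Q + 1 : ℕ) + x := by exact_mod_cast (by omega : a ≤ Q + 1 + x)
    _ ≤ (Q + 1 : ℕ) * y ^ e + ((Q + 1)! * K) ^ ((Q + 1 : ℕ)⁻¹ : ℝ) * y ^ e :=
      add_le_add (le_mul_of_one_le_right (Nat.cast_nonneg _) hye) <|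
        le_rpow_inv_mul_rpow_of_pow_le (Nat.cast_nonneg x) (by positivity)
          (zero_le_one.trans hy) (Nat.succ_ne_zero Q) hx
    _ = _ := by ring

theorem Ffin_le {n r : ℕ} {ℓ : Fin r → ℕ} {B : ℝ} (hB : 0 ≤ B)
    (h : ∀ A : Finset ℤ, (A : Set ℤ) ⊆ Set.Icc 1 n → LFree r ℓ (A : Set ℤ) → (#A : ℝ) ≤ B) :
    (Ffin n r ℓ : ℝ) ≤ B := by
  unfold Ffin
  set s := {k | ∃ A : Finset ℤ, (A : Set ℤ) ⊆ Set.Icc 1 n ∧ LFree r ℓ (A : Set ℤ) ∧ #A = k}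
  rcases s.eq_empty_or_nonempty with hs | hs
  · rw [hs, csSup_empty, bot_eq_zero, Nat.cast_zero]
    exact hB
  · have hbdd : BddAbove s := by
      refine ⟨n, ?_⟩
      rintro k ⟨A, hA, -, rfl⟩
      have hA' : A ⊆ Icc (1 : ℤ) n := fun x hx => by simpa using hA (mem_coe.2 hx)
      simpa using card_le_card hA'
    obtain ⟨A, hA, hfree, hcard⟩ := Nat.sSup_mem hs hbdd
    rw [← hcard]
    exact h A hA hfree

theorem exists_card_le_of_LFree (r : ℕ) (ℓ : Fin (r + 1) → ℕ) :
    ∃ C : ℝ, 0 < C ∧ ∀ n : ℕ, 1 ≤ n → ∀ A : Finset ℤ, (A : Set ℤ) ⊆ Set.Icc 1 n →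
      LFree (r + 1) ℓ (A : Set ℤ) →
      (#A : ℝ) ≤ C * (n : ℝ) ^ (1 - 1 / ∏ i : Fin r, (ℓ i.castSucc : ℝ)) := by
  induction r with
  | zero =>
    refine ⟨ℓ 0 + 1, by positivity, fun n _ A _ hA => ?_⟩
    rw [univ_eq_empty, prod_empty, div_one, sub_self, Real.rpow_zero, mul_one]
    exact_mod_cast hA.card_lt.le.trans (Nat.le_succ _)
  | succ r ih =>
    obtain ⟨C', hC', hC'A⟩ := ih fun i => ℓ i.succ
    refine ⟨ℓ 0 + ((ℓ 0)! * C') ^ ((ℓ 0 : ℝ)⁻¹), by positivity, fun n hn A hA hfree => ?_⟩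
    obtain ⟨Q, hQ⟩ := Nat.exists_eq_add_one_of_ne_zero (hfree.ne_zero 0)
    set P' := ∏ i : Fin r, (ℓ i.castSucc.succ : ℝ)
    have hP' : 1 ≤ P' := one_le_prod fun i _ => by
      exact_mod_cast Nat.one_le_iff_ne_zero.2 (hfree.ne_zero _)
    have hprod : ∏ i : Fin (r + 1), (ℓ i.castSucc : ℝ) = (Q + 1 : ℕ) * P' := by
      rw [Fin.prod_univ_succ, Fin.castSucc_zero, hQ]
      simp only [P', Fin.succ_castSucc]
    have hn1 : (1 : ℝ) ≤ n := by exact_mod_cast hn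
    rw [hprod, hQ]
    refine cast_le_of_choose_le hC'.le hn1
      (sub_nonneg.2 (div_le_one_of_le₀ (one_le_mul_of_one_le_of_one_le (by simp) hP')
        (by positivity))) ?_
    have hexp : (n : ℝ) ^ ((Q + 1 : ℕ) * (1 - 1 / ((Q + 1 : ℕ) * P'))) =
        n ^ Q * n ^ (1 - 1 / P') := by
      rw [← Real.rpow_natCast _ Q, ← Real.rpow_add (by positivity)]
      congr 1
      push_cast
      field_simp
      ring
    rw [hexp, mul_left_comm]
    refine choose_card_le_mul_of_shiftsInto_le hA fun S hS => hC'A n hn _ ?_ ?_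
    · exact fun y hy => hA (filter_subset _ A hy)
    · exact hfree.shiftsInto (hS.trans hQ.symm)

theorem stmt7_general (m : ℕ) (ℓ : Fin (m + 2) → ℕ) :
    ∃ C : ℝ, 0 < C ∧ ∀ n : ℕ, 1 ≤ n →
      (Ffin n (m + 2) ℓ : ℝ)
        ≤ C * (n : ℝ) ^ (1 - 1 / (∏ i : Fin (m + 1), (ℓ i.castSucc : ℝ))) := by
  obtain ⟨C, hC, hbound⟩ := exists_card_le_of_LFree (m + 1) ℓ
  exact ⟨C, hC, fun n hn => Ffin_le (by positivity) fun A hA hfree => hbound n hn A hA hfree⟩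

/-- for `r ≥ 2` (here `r = m + 2`) and `2 ≤ ℓ₁ ≤ ⋯ ≤ ℓ_r` there is a
constant `C` with `F(n, L^{(r)}_{ℓ₁,…,ℓ_r}) ≤ C · n^{1 − 1/(ℓ₁⋯ℓ_{r−1})}` for all `n ≥ 1`. -/
theorem stmt7 (m : ℕ) (ℓ : Fin (m + 2) → ℕ) (hℓ : ∀ i, 2 ≤ ℓ i) (hmono : Monotone ℓ) :
    ∃ C : ℝ, 0 < C ∧ ∀ n : ℕ, 1 ≤ n →
      (Ffin n (m + 2) ℓ : ℝ)
        ≤ C * (n : ℝ) ^ (1 - 1 / (∏ i : Fin (m + 1), (ℓ i.castSucc : ℝ))) :=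
  stmt7_general m ℓ
end

section
/- Let p be an odd prime and θ a generator of F_p^*. The set A = {(x₁, x₂, x₃) ∈ Z_{p−1}³ : θ^{x₁} + θ^{x₂} + θ^{x₃} = 1, x₁, x₂, x₃ ≠ 0} contains no subset of the form L₁ + L₂ + L₃ with L₁, L₂, L₃ ⊆ Z_{p−1}³ each of cardinality 2. In particular F(Z_{p−1}³, L^{(3)}_{2,2,2}) ≥ (p−3)². -/
/-!
Put `s = a₁ + a₂ + a₃` and `dᵢ = bᵢ - aᵢ` for a sumset `{a₁, b₁} + {a₂, b₂} + {a₃, b₃} ⊆ A`,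
and let `u, x, y, z ∈ F³` be the coordinatewise exponentials `θ^s, θ^{d₁}, θ^{d₂}, θ^{d₃}`.
The eight points of the sumset say that `φ f = ∑ⱼ uⱼ fⱼ` equals `1` on every product of a
subset of `{x, y, z}`; by inclusion–exclusion, `X = x - 1`, `Y = y - 1`, `Z = z - 1` and all
their products are killed by `φ`, while `φ 1 = 1`. Since every `uⱼ ≠ 0`, the form `φ (f g)` is
nondegenerate, so `1, X, Y` lie in the plane orthogonal to `Z ≠ 0`; as `φ 1 ≠ 0`, `Y` is a
multiple of `X`, and likewise `Z`. Hence `φ X = φ X² = φ X³ = 0`, and the usual Vandermonde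
argument makes the `uⱼ` over each level set `{X = c}`, `c ≠ 0`, sum to `0`. With three
coordinates, `uⱼ ∉ {0, 1}` and `∑ uⱼ = 1`, this is impossible unless `X = 0`, i.e. `a₁ = b₁`.

Through the discrete logarithm, the points of `A` correspond to the pairs `(a, b)` with
`a, b, a + b ∉ {0, 1}`, of which there are `(p - 2)² - (p - 2) - (p - 3) = (p - 3)²`.
-/

open Pointwise

/-- `F(G, L^{(r)}_{ℓ₁,…,ℓ_r})`: largest size of an `L^{(r)}_{ℓ₁,…,ℓ_r}`-free set
in the abelian group `G`. -/
noncomputable def Fgrp (G : Type*) [AddCommGroup G] [DecidableEq G]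
    (r : ℕ) (ℓ : Fin r → ℕ) : ℕ :=
  sSup {k | ∃ A : Finset G, LFree r ℓ (A : Set G) ∧ A.card = k}

open Finset Matrix

section WeightedPowerSums

variable {F : Type*} [Field F]

theorem exists_eq_smul_of_dotProduct_mul_eq_zero {u X Y Z : Fin 3 → F}
    (hu : ∀ i, u i ≠ 0) (hu1 : ∑ i, u i = 1) (hX0 : X ≠ 0) (hZ0 : Z ≠ 0)
    (hX : u ⬝ᵥ X = 0) (hY : u ⬝ᵥ Y = 0) (hZ : u ⬝ᵥ Z = 0)
    (hXZ : u ⬝ᵥ (X * Z) = 0) (hYZ : u ⬝ᵥ (Y * Z) = 0) :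
    ∃ c : F, Y = c • X := by
  have hw : u * Z ≠ 0 := by
    obtain ⟨i, hi⟩ := Function.ne_iff.1 hZ0
    exact Function.ne_iff.2 ⟨i, mul_ne_zero (hu i) hi⟩
  obtain ⟨v, hv0, hv⟩ := exists_vecMul_eq_zero_iff.2 <|
    exists_mulVec_eq_zero_iff (M := of ![1, X, Y]).1
      ⟨u * Z, hw, by
        simp only [dotProduct, Pi.mul_apply, Fin.sum_univ_three] at hZ hXZ hYZ
        ext i; fin_cases i <;> simp [mulVec, dotProduct, Fin.sum_univ_three]
        exacts [by linear_combination hZ, by linear_combination hXZ, by linear_combination hYZ]⟩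
  have hcomb : v 0 • (1 : Fin 3 → F) + v 1 • X + v 2 • Y = 0 := by
    rw [← hv]; ext i; simp [vecMul, dotProduct, Fin.sum_univ_three]
  have hv0' : v 0 = 0 := by
    simpa [hX, hY, dotProduct_one, hu1] using congrArg (u ⬝ᵥ ·) hcomb
  have hv2 : v 2 ≠ 0 := by
    intro hv2
    refine hv0 (funext fun i => ?_)
    fin_cases i
    · exact hv0'
    · simpa [hv0', hv2, hX0] using hcomb
    · exact hv2
  refine ⟨-(v 1 / v 2), ?_⟩
  rw [hv0', zero_smul, zero_add, add_eq_zero_iff_eq_neg] at hcomb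
  rw [neg_smul, div_eq_inv_mul, mul_smul, hcomb, smul_neg, neg_neg, inv_smul_smul₀ hv2]

open Polynomial in
theorem sum_filter_eq_zero_of_dotProduct_pow_eq_zero {ι : Type*} [Fintype ι] [DecidableEq F]
    {u w : ι → F} (hpow : ∀ k, 1 ≤ k → k ≤ Fintype.card ι → u ⬝ᵥ w ^ k = 0)
    {c : F} (hc : c ≠ 0) : ∑ i with w i = c, u i = 0 := by
  by_cases hcw : ∃ j, w j = c
  swap
  · exact sum_eq_zero fun i hi => absurd ⟨i, (mem_filter.1 hi).2⟩ hcw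
  obtain ⟨j, hj⟩ := hcw
  -- `P` vanishes at `0` and at every `w i ≠ c`, but not at `c`.
  set s := univ.filter fun i => w i ≠ c
  set P : F[X] := X * ∏ i ∈ s, (X - C (w i))
  have hdeg : P.natDegree ≤ Fintype.card ι := by
    rw [natDegree_X_mul (Monic.ne_zero (monic_prod_of_monic _ _ fun i _ => monic_X_sub_C (w i))),
      natDegree_finsetProd_X_sub_C_eq_card]
    exact card_lt_univ_of_notMem (x := j) (by simp [s, hj])
  have hsum : ∑ i, u i * P.eval (w i) = 0 := by
    simp_rw [eval_eq_sum_range, mul_sum]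
    rw [sum_comm]
    refine sum_eq_zero fun k hk => ?_
    rcases Nat.eq_zero_or_pos k with rfl | hk0
    · simp [P]
    · have := hpow k hk0 (by have := mem_range.1 hk; omega)
      simp only [dotProduct, Pi.pow_apply] at this
      simp_rw [mul_left_comm (u _) (P.coeff k), ← mul_sum, this, mul_zero]
  have hoff : ∑ i with w i ≠ c, u i * P.eval (w i) = 0 := sum_eq_zero fun i hi => by
    rw [eval_mul, eval_prod, prod_eq_zero hi (by simp), mul_zero, mul_zero]
  have hon : ∑ i with w i = c, u i * P.eval (w i) = (∑ i with w i = c, u i) * P.eval c := by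
    rw [sum_mul]
    exact sum_congr rfl fun i hi => by rw [(mem_filter.1 hi).2]
  have hPc : P.eval c ≠ 0 := by
    simp only [P, eval_mul, eval_X, eval_prod, eval_sub, eval_C]
    exact mul_ne_zero hc (prod_ne_zero_iff.2 fun i hi => sub_ne_zero.2 (mem_filter.1 hi).2.symm)
  rw [← sum_filter_add_sum_filter_not univ (w · = c), hoff, add_zero, hon] at hsum
  exact (mul_eq_zero.1 hsum).resolve_right hPc

theorem sum_ne_zero_of_card_le_three {ι : Type*} [Fintype ι] [DecidableEq ι]
    (hcard : Fintype.card ι ≤ 3) {u : ι → F} (hu0 : ∀ i, u i ≠ 0) (hu1 : ∀ i, u i ≠ 1)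
    (hsum : ∑ i, u i = 1) {S : Finset ι} (hS : S.Nonempty) : ∑ i ∈ S, u i ≠ 0 := by
  rcases Sᶜ.eq_empty_or_nonempty with hSc | ⟨j, hj⟩
  · rw [(compl_eq_empty_iff S).1 hSc, hsum]
    exact one_ne_zero
  rcases Nat.lt_or_ge 1 #S with hS2 | hS1
  · have hSc : #Sᶜ ≤ 1 := by rw [card_compl]; omega
    have hj' : ∑ i ∈ Sᶜ, u i = u j :=
      sum_eq_single_of_mem j hj fun i hi hij => absurd (card_le_one.1 hSc i hi j hj) hij
    rw [← sum_add_sum_compl S u, hj'] at hsum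
    intro h
    exact hu1 j (by linear_combination hsum - h)
  · obtain ⟨i, rfl⟩ := card_eq_one.1 (le_antisymm hS1 hS.card_pos)
    rw [sum_singleton]
    exact hu0 i

theorem eq_zero_of_dotProduct_pow_eq_zero {ι : Type*} [Fintype ι]
    (hcard : Fintype.card ι ≤ 3) {u w : ι → F} (hu0 : ∀ i, u i ≠ 0) (hu1 : ∀ i, u i ≠ 1)
    (hsum : ∑ i, u i = 1) (hpow : ∀ k, 1 ≤ k → k ≤ Fintype.card ι → u ⬝ᵥ w ^ k = 0) :
    w = 0 := by
  classical
  by_contra hw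
  obtain ⟨j, hj⟩ := Function.ne_iff.1 hw
  exact sum_ne_zero_of_card_le_three hcard hu0 hu1 hsum (S := {i | w i = w j}) ⟨j, by simp⟩
    (sum_filter_eq_zero_of_dotProduct_pow_eq_zero hpow hj)

theorem not_forall_dotProduct_mul_mul_eq_one {u x y z : Fin 3 → F}
    (hu0 : ∀ i, u i ≠ 0) (hu1 : ∀ i, u i ≠ 1) (hx : x ≠ 1) (hy : y ≠ 1) (hz : z ≠ 1) :
    ¬ ∀ x' ∈ ({1, x} : Set (Fin 3 → F)), ∀ y' ∈ ({1, y} : Set (Fin 3 → F)),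
      ∀ z' ∈ ({1, z} : Set (Fin 3 → F)), u ⬝ᵥ (x' * y' * z') = 1 := by
  intro h
  have h₀ : u ⬝ᵥ 1 = 1 := by simpa using h 1 (by simp) 1 (by simp) 1 (by simp)
  have hx₁ : u ⬝ᵥ x = 1 := by simpa using h x (by simp) 1 (by simp) 1 (by simp)
  have hy₁ : u ⬝ᵥ y = 1 := by simpa using h 1 (by simp) y (by simp) 1 (by simp)
  have hz₁ : u ⬝ᵥ z = 1 := by simpa using h 1 (by simp) 1 (by simp) z (by simp)
  have hxy : u ⬝ᵥ (x * y) = 1 := by simpa using h x (by simp) y (by simp) 1 (by simp)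
  have hxz : u ⬝ᵥ (x * z) = 1 := by simpa using h x (by simp) 1 (by simp) z (by simp)
  have hyz : u ⬝ᵥ (y * z) = 1 := by simpa using h 1 (by simp) y (by simp) z (by simp)
  have hxyz : u ⬝ᵥ (x * y * z) = 1 := h x (by simp) y (by simp) z (by simp)
  set X := x - 1
  set Y := y - 1
  set Z := z - 1
  have hsum : ∑ i, u i = 1 := by rwa [← dotProduct_one]
  have hX : u ⬝ᵥ X = 0 := by simp [X, dotProduct_sub, hx₁, h₀]
  have hY : u ⬝ᵥ Y = 0 := by simp [Y, dotProduct_sub, hy₁, h₀]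
  have hZ : u ⬝ᵥ Z = 0 := by simp [Z, dotProduct_sub, hz₁, h₀]
  have hXY : u ⬝ᵥ (X * Y) = 0 := by
    rw [show X * Y = x * y - x - y + 1 by ring]
    simp [dotProduct_sub, dotProduct_add, hxy, hx₁, hy₁, h₀]
  have hXZ : u ⬝ᵥ (X * Z) = 0 := by
    rw [show X * Z = x * z - x - z + 1 by ring]
    simp [dotProduct_sub, dotProduct_add, hxz, hx₁, hz₁, h₀]
  have hYZ : u ⬝ᵥ (Y * Z) = 0 := by
    rw [show Y * Z = y * z - y - z + 1 by ring]
    simp [dotProduct_sub, dotProduct_add, hyz, hy₁, hz₁, h₀]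
  have hXYZ : u ⬝ᵥ (X * Y * Z) = 0 := by
    rw [show X * Y * Z = x * y * z - x * y - x * z - y * z + x + y + z - 1 by ring]
    simp [dotProduct_sub, dotProduct_add, hxyz, hxy, hxz, hyz, hx₁, hy₁, hz₁, h₀]
  have hX0 : X ≠ 0 := sub_ne_zero.2 hx
  obtain ⟨c, hc⟩ := exists_eq_smul_of_dotProduct_mul_eq_zero hu0 hsum hX0 (sub_ne_zero.2 hz)
    hX hY hZ hXZ hYZ
  obtain ⟨d, hd⟩ := exists_eq_smul_of_dotProduct_mul_eq_zero hu0 hsum hX0 (sub_ne_zero.2 hy)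
    hX hZ hY hXY (by rwa [mul_comm])
  have hc0 : c ≠ 0 := by rintro rfl; exact sub_ne_zero.2 hy (by rwa [zero_smul] at hc)
  have hd0 : d ≠ 0 := by rintro rfl; exact sub_ne_zero.2 hz (by rwa [zero_smul] at hd)
  simp only [hc, hd, mul_smul_comm, smul_mul_assoc, dotProduct_smul, smul_eq_mul] at hXY hXYZ
  refine hX0 (eq_zero_of_dotProduct_pow_eq_zero (by simp) hu0 hu1 hsum fun k hk1 hk3 => ?_)
  rw [Fintype.card_fin] at hk3
  interval_cases k
  · rwa [pow_one]
  · simpa [sq, hc0] using hXY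
  · simpa [pow_succ, hc0, hd0] using hXYZ

end WeightedPowerSums

def expVec {M : Type*} [Monoid M] {n : ℕ} (θ : M) (x : ZMod n × ZMod n × ZMod n) : Fin 3 → M :=
  ![θ ^ x.1.val, θ ^ x.2.1.val, θ ^ x.2.2.val]

def expSolutions {R : Type*} [Semiring R] {n : ℕ} (θ : R) : Set (ZMod n × ZMod n × ZMod n) :=
  {x | θ ^ x.1.val + θ ^ x.2.1.val + θ ^ x.2.2.val = 1 ∧ x.1 ≠ 0 ∧ x.2.1 ≠ 0 ∧ x.2.2 ≠ 0}

section ExpVec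

variable {M : Type*} [Monoid M] {n : ℕ} {θ : M}

theorem pow_val_add [NeZero n] (hθ : orderOf θ = n) (s t : ZMod n) :
    θ ^ (s + t).val = θ ^ s.val * θ ^ t.val := by
  have h := pow_mod_orderOf θ (s.val + t.val)
  rw [hθ] at h
  rw [ZMod.val_add, h, pow_add]

theorem pow_val_injective [NeZero n] (hθ : orderOf θ = n) :
    Function.Injective fun t : ZMod n => θ ^ t.val := by
  intro s t hst
  refine ZMod.val_injective n (pow_injOn_Iio_orderOf ?_ ?_ hst) <;>
    simp only [Set.mem_Iio, hθ, ZMod.val_lt]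

theorem pow_val_eq_one_iff [NeZero n] (hθ : orderOf θ = n) {t : ZMod n} :
    θ ^ t.val = 1 ↔ t = 0 := by
  rw [← (pow_val_injective hθ).eq_iff, ZMod.val_zero, pow_zero]

@[simp]
theorem expVec_zero : expVec θ (0 : ZMod n × ZMod n × ZMod n) = 1 := by
  ext i; fin_cases i <;> simp [expVec]

theorem expVec_add [NeZero n] (hθ : orderOf θ = n) (x y : ZMod n × ZMod n × ZMod n) :
    expVec θ (x + y) = expVec θ x * expVec θ y := by
  ext i; fin_cases i <;> simp [expVec, pow_val_add hθ]

theorem expVec_injective [NeZero n] (hθ : orderOf θ = n) :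
    Function.Injective (expVec θ : ZMod n × ZMod n × ZMod n → Fin 3 → M) := by
  intro x y hxy
  have h i := congrFun hxy i
  simp only [expVec] at h
  ext
  exacts [pow_val_injective hθ (h 0), pow_val_injective hθ (h 1), pow_val_injective hθ (h 2)]

theorem expVec_apply_ne_zero {M₀ : Type*} [MonoidWithZero M₀] [NoZeroDivisors M₀] [Nontrivial M₀]
    {θ : M₀} [NeZero n] (hθ : orderOf θ = n) (x : ZMod n × ZMod n × ZMod n) (i : Fin 3) :
    expVec θ x i ≠ 0 := by
  have hθ0 : θ ≠ 0 := by
    have h := pow_orderOf_eq_one θ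
    rintro rfl
    simp [hθ, zero_pow (NeZero.ne n)] at h
  fin_cases i <;> exact pow_ne_zero _ hθ0

theorem mem_expSolutions_iff {R : Type*} [Semiring R] {θ : R} [NeZero n] (hθ : orderOf θ = n)
    {x : ZMod n × ZMod n × ZMod n} :
    x ∈ expSolutions θ ↔ ∑ i, expVec θ x i = 1 ∧ ∀ i, expVec θ x i ≠ 1 := by
  simp [expSolutions, expVec, Fin.sum_univ_three, Fin.forall_fin_succ, pow_val_eq_one_iff hθ]

end ExpVec

theorem lFree_expSolutions {F : Type*} [Field F] {n : ℕ} [NeZero n] {θ : F}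
    (hθ : orderOf θ = n) :
    LFree 3 (fun _ => 2) (expSolutions θ : Set (ZMod n × ZMod n × ZMod n)) := by
  intro L hL hsub
  have hsum : ∀ c₀ ∈ L 0, ∀ c₁ ∈ L 1, ∀ c₂ ∈ L 2, c₀ + c₁ + c₂ ∈ expSolutions θ :=
    fun c₀ h₀ c₁ h₁ c₂ h₂ => hsub <| by
      rw [mem_coe, Fin.sum_univ_three]
      exact add_mem_add (add_mem_add h₀ h₁) h₂
  obtain ⟨a₀, b₀, hab₀, hL₀⟩ := card_eq_two.1 (hL 0)
  obtain ⟨a₁, b₁, hab₁, hL₁⟩ := card_eq_two.1 (hL 1)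
  obtain ⟨a₂, b₂, hab₂, hL₂⟩ := card_eq_two.1 (hL 2)
  have hshift : ∀ {a b δ} {L : Finset (ZMod n × ZMod n × ZMod n)}, L = {a, b} →
      δ ∈ ({0, b - a} : Set _) → a + δ ∈ L := by
    rintro a b δ L rfl (rfl | rfl) <;> simp
  have hne : ∀ {a b : ZMod n × ZMod n × ZMod n}, a ≠ b → expVec θ (b - a) ≠ 1 := fun hab h =>
    hab (sub_eq_zero.1 (expVec_injective hθ (h.trans expVec_zero.symm))).symm
  have hs := (mem_expSolutions_iff hθ).1 (hsum _ (hshift hL₀ (.inl rfl)) _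
    (hshift hL₁ (.inl rfl)) _ (hshift hL₂ (.inl rfl)))
  simp only [add_zero] at hs
  refine not_forall_dotProduct_mul_mul_eq_one (u := expVec θ (a₀ + a₁ + a₂))
    (expVec_apply_ne_zero hθ _) hs.2 (hne hab₀) (hne hab₁) (hne hab₂) ?_
  have himage : ∀ d : ZMod n × ZMod n × ZMod n,
      ({1, expVec θ d} : Set (Fin 3 → F)) = expVec θ '' {0, d} := fun d => by
    rw [Set.image_pair, expVec_zero]
  simp only [himage, Set.forall_mem_image]
  intro δ₀ h₀ δ₁ h₁ δ₂ h₂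
  have h := ((mem_expSolutions_iff hθ).1
    (hsum _ (hshift hL₀ h₀) _ (hshift hL₁ h₁) _ (hshift hL₂ h₂))).1
  rw [show a₀ + δ₀ + (a₁ + δ₁) + (a₂ + δ₂) = a₀ + a₁ + a₂ + δ₀ + δ₁ + δ₂ by abel,
    expVec_add hθ, expVec_add hθ, expVec_add hθ] at h
  simpa only [dotProduct, Pi.mul_apply, mul_assoc] using h

section Counting

variable {K : Type*} [Field K] [Fintype K]

theorem sq_card_sub_three_le_card_filter [DecidableEq K] (h : (-1 : K) ≠ 1) :
    (Fintype.card K - 3) ^ 2 ≤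
      #{v ∈ ({0, 1}ᶜ ×ˢ {0, 1}ᶜ : Finset (K × K)) | v.1 + v.2 ∉ ({0, 1} : Finset K)} := by
  set U : Finset K := {0, 1}ᶜ
  have hU : #U = Fintype.card K - 2 := by rw [card_compl, card_pair zero_ne_one]
  have hneg : (-1 : K) ∈ U := by simp [U, h]
  have hinj : ∀ c : K, Set.InjOn Prod.fst (↑{v ∈ U ×ˢ U | v.1 + v.2 = c} : Set (K × K)) := by
    intro c v hv v' hv' hvv'
    simp only [coe_filter, Set.mem_ofPred_eq] at hv hv'
    exact Prod.ext hvv' (by linear_combination hv.2 - hv'.2 - hvv')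
  have h₀ : #{v ∈ U ×ˢ U | v.1 + v.2 = 0} ≤ #(U.erase (-1)) := by
    refine card_le_card_of_injOn Prod.fst (fun v hv => ?_) (hinj 0)
    simp only [coe_filter, Set.mem_ofPred_eq, mem_product, U, mem_compl, mem_insert,
      mem_singleton, not_or] at hv
    simp only [coe_erase, Set.mem_sdiff, mem_coe, Set.mem_singleton_iff]
    exact ⟨by simp [U, hv.1.1.1, hv.1.1.2], fun h1 => hv.1.2.2 (by linear_combination hv.2 - h1)⟩
  have h₁ : #{v ∈ U ×ˢ U | v.1 + v.2 = 1} ≤ #U :=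
    card_le_card_of_injOn Prod.fst (fun v hv => (mem_product.1 (mem_filter.1 hv).1).1) (hinj 1)
  have hbad : #{v ∈ U ×ˢ U | ¬ v.1 + v.2 ∉ ({0, 1} : Finset K)} ≤
      #{v ∈ U ×ˢ U | v.1 + v.2 = 0} + #{v ∈ U ×ˢ U | v.1 + v.2 = 1} := by
    simp only [not_not, mem_insert, mem_singleton]
    rw [filter_or]
    exact card_union_le _ _
  have hsplit := card_filter_add_card_filter_not (s := U ×ˢ U)
    fun v => v.1 + v.2 ∉ ({0, 1} : Finset K)
  rw [card_product, hU] at hsplit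
  rw [card_erase_of_mem hneg, hU] at h₀
  rw [hU] at h₁
  generalize Fintype.card K = k at *
  rcases Nat.lt_or_ge k 3 with hk | hk
  · simp [Nat.sub_eq_zero_of_le hk.le]
  obtain ⟨m, rfl⟩ := Nat.exists_eq_add_of_le' hk
  simp only [Nat.add_sub_cancel, show m + 3 - 2 = m + 1 by omega, show m + 1 - 1 = m by omega]
    at *
  nlinarith

theorem exists_pow_val_eq {q : ℕ} (hq : Fintype.card K = q) {θ : K} (hθ : orderOf θ = q - 1)
    {c : K} (hc : c ≠ 0) : ∃ t : ZMod (q - 1), θ ^ t.val = c := by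
  have : NeZero (q - 1) := ⟨by have := Fintype.one_lt_card (α := K); omega⟩
  have hprim : IsPrimitiveRoot θ (q - 1) := hθ ▸ IsPrimitiveRoot.orderOf θ
  obtain ⟨i, hi, rfl⟩ := hprim.eq_pow_of_pow_eq_one (hq ▸ FiniteField.pow_card_sub_one_eq_one c hc)
  exact ⟨i, by rw [ZMod.val_natCast_of_lt hi]⟩

theorem sq_sub_three_le_ncard_expSolutions [DecidableEq K] {q : ℕ} (hq : Fintype.card K = q)
    {θ : K} (hθ : orderOf θ = q - 1) (h : (-1 : K) ≠ 1) :
    (q - 3) ^ 2 ≤ (expSolutions θ : Set (ZMod (q - 1) × ZMod (q - 1) × ZMod (q - 1))).ncard := by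
  have : NeZero (q - 1) := ⟨by have := Fintype.one_lt_card (α := K); omega⟩
  set T := {v ∈ ({0, 1}ᶜ ×ˢ {0, 1}ᶜ : Finset (K × K)) | v.1 + v.2 ∉ ({0, 1} : Finset K)}
  -- each pair `(a, b) ∈ T` is `(θ^x₁, θ^x₂)` for the solution with `θ^x₃ = 1 - a - b`
  have hT : (T : Set (K × K)) ⊆
      (fun x : ZMod (q - 1) × ZMod (q - 1) × ZMod (q - 1) => (θ ^ x.1.val, θ ^ x.2.1.val)) ''
        expSolutions θ := by
    rintro ⟨a, b⟩ hab
    simp only [T, coe_filter, mem_product, mem_compl, mem_insert, mem_singleton, not_or,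
      Set.mem_ofPred_eq] at hab
    obtain ⟨⟨⟨ha0, ha1⟩, hb0, hb1⟩, hab0, hab1⟩ := hab
    obtain ⟨t₁, ht₁⟩ := exists_pow_val_eq hq hθ ha0
    obtain ⟨t₂, ht₂⟩ := exists_pow_val_eq hq hθ hb0
    obtain ⟨t₃, ht₃⟩ := exists_pow_val_eq hq hθ (c := 1 - a - b)
      (fun h => hab1 (by linear_combination -h))
    have hne : ∀ {t : ZMod (q - 1)} {c : K}, θ ^ t.val = c → c ≠ 1 → t ≠ 0 := by
      rintro t c rfl hc rfl
      exact hc (by rw [ZMod.val_zero, pow_zero])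
    refine ⟨(t₁, t₂, t₃), ⟨by rw [ht₁, ht₂, ht₃]; ring, hne ht₁ ha1, hne ht₂ hb1,
      hne ht₃ fun h => hab0 (by linear_combination -h)⟩, Prod.ext ht₁ ht₂⟩
  calc (q - 3) ^ 2 ≤ #T := hq ▸ sq_card_sub_three_le_card_filter h
    _ = (T : Set (K × K)).ncard := (Set.ncard_coe_finset T).symm
    _ ≤ _ := Set.ncard_le_ncard hT (Set.toFinite _)
    _ ≤ _ := Set.ncard_image_le (Set.toFinite _)

end Counting

theorem ncard_le_Fgrp {G : Type*} [AddCommGroup G] [DecidableEq G] [Finite G] {r : ℕ}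
    {ℓ : Fin r → ℕ} {A : Set G} (hA : LFree r ℓ A) : A.ncard ≤ Fgrp G r ℓ := by
  have := Fintype.ofFinite G
  refine le_csSup ⟨Fintype.card G, ?_⟩
    ⟨A.toFinite.toFinset, by rwa [Set.Finite.coe_toFinset], (Set.ncard_eq_toFinset_card A).symm⟩
  rintro _ ⟨B, -, rfl⟩
  exact card_le_univ B

theorem stmt9_general (p : ℕ) (hp : p.Prime) (θ : ZMod p)
    (hθ : orderOf θ = p - 1) :
    LFree 3 (fun _ => 2)
      {x : ZMod (p - 1) × ZMod (p - 1) × ZMod (p - 1) |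
        θ ^ x.1.val + θ ^ x.2.1.val + θ ^ x.2.2.val = 1 ∧
        x.1 ≠ 0 ∧ x.2.1 ≠ 0 ∧ x.2.2 ≠ 0} ∧
    (p - 3) ^ 2 ≤ Fgrp (ZMod (p - 1) × ZMod (p - 1) × ZMod (p - 1)) 3 (fun _ => 2) := by
  have : Fact p.Prime := ⟨hp⟩
  have : NeZero (p - 1) := ⟨by have := hp.two_le; omega⟩
  refine ⟨lFree_expSolutions hθ, ?_⟩
  rcases hp.two_le.eq_or_lt with rfl | hp2
  · simp
  have : Fact (2 < p) := ⟨hp2⟩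
  exact (sq_sub_three_le_ncard_expSolutions (ZMod.card p) hθ ZMod.neg_one_ne_one).trans
    (ncard_le_Fgrp (lFree_expSolutions hθ))

/-- for an odd prime `p` and a generator `θ` of `F_p^*`, the set
`A = {(x₁,x₂,x₃) ∈ Z_{p−1}³ : θ^{x₁}+θ^{x₂}+θ^{x₃} = 1, x₁,x₂,x₃ ≠ 0}` contains no
sumset `L₁ + L₂ + L₃` with `|Lᵢ| = 2`; in particular
`F(Z_{p−1}³, L^{(3)}_{2,2,2}) ≥ (p−3)²`. -/
theorem stmt9 (p : ℕ) (hp : p.Prime) (hodd : Odd p) (θ : ZMod p)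
    (hθ : orderOf θ = p - 1) :
    LFree 3 (fun _ => 2)
      {x : ZMod (p - 1) × ZMod (p - 1) × ZMod (p - 1) |
        θ ^ x.1.val + θ ^ x.2.1.val + θ ^ x.2.2.val = 1 ∧
        x.1 ≠ 0 ∧ x.2.1 ≠ 0 ∧ x.2.2 ≠ 0} ∧
    (p - 3) ^ 2 ≤ Fgrp (ZMod (p - 1) × ZMod (p - 1) × ZMod (p - 1)) 3 (fun _ => 2) :=
  stmt9_general p hp θ hθ
end

section
/- Let m ≥ 2 and define φ_m : Z_m³ → Z by φ_m(x₁,x₂,x₃) = (2m)²x₁ + (2m)x₂ + x₃ using representatives in [0, m−1]. If A ⊆ Z_m³ contains no sumset L₁ + L₂ + L₃ with |L₁| = |L₂| = |L₃| = 2, then φ_m(A) ⊆ Z contains no sumset L₁ + L₂ + L₃ of finite sets of integers with |L₁| = |L₂| = |L₃| = 2 (i.e., φ_m(A) contains no Hilbert cube of dimension 3). -/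
open Pointwise

def phiM (m : ℕ) (x : ZMod m × ZMod m × ZMod m) : ℤ :=
  (2 * m : ℤ) ^ 2 * x.1.val + (2 * m : ℤ) * x.2.1.val + (x.2.2.val : ℤ)

lemma digits_zero {M a b c : ℤ} (hM : 0 < M) (hb : |b| < M) (hc : |c| < M)
    (h : M ^ 2 * a + M * b + c = 0) : a = 0 ∧ b = 0 ∧ c = 0 := by
  have hdc : M ∣ c := ⟨-(M * a + b), by linear_combination h⟩
  have hc0 : c = 0 := Int.eq_zero_of_abs_lt_dvd hdc hc
  subst hc0
  have h2 : M * (M * a + b) = 0 := by linear_combination h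
  have h3 : M * a + b = 0 := (mul_eq_zero.mp h2).resolve_left hM.ne'
  have hdb : M ∣ b := ⟨-a, by linear_combination h3⟩
  have hb0 : b = 0 := Int.eq_zero_of_abs_lt_dvd hdb hb
  subst hb0
  have hMa : M * a = 0 := by linarith
  exact ⟨(mul_eq_zero.mp hMa).resolve_left hM.ne', rfl, rfl⟩

lemma freiman (m : ℕ) (hm : 2 ≤ m) {x y u v : ZMod m × ZMod m × ZMod m}
    (h : phiM m x + phiM m y = phiM m u + phiM m v) : x + y = u + v := by
  haveI : NeZero m := ⟨by omega⟩
  have hv : ∀ z : ZMod m, (z.val : ℤ) < m := fun z => by exact_mod_cast ZMod.val_lt z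
  have hv0 : ∀ z : ZMod m, (0 : ℤ) ≤ (z.val : ℤ) := fun z => Int.natCast_nonneg _
  unfold phiM at h
  have key : ((x.1.val : ℤ) + y.1.val - u.1.val - v.1.val) = 0 ∧
      ((x.2.1.val : ℤ) + y.2.1.val - u.2.1.val - v.2.1.val) = 0 ∧
      ((x.2.2.val : ℤ) + y.2.2.val - u.2.2.val - v.2.2.val) = 0 := by
    apply digits_zero (M := (2 * m : ℤ)) (by positivity)
    · rw [abs_lt]
      constructor <;>
        linarith [hv x.2.1, hv y.2.1, hv u.2.1, hv v.2.1,
          hv0 x.2.1, hv0 y.2.1, hv0 u.2.1, hv0 v.2.1]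
    · rw [abs_lt]
      constructor <;>
        linarith [hv x.2.2, hv y.2.2, hv u.2.2, hv v.2.2,
          hv0 x.2.2, hv0 y.2.2, hv0 u.2.2, hv0 v.2.2]
    · linear_combination h
  obtain ⟨h1, h2, h3⟩ := key
  have conv : ∀ a b c d : ZMod m, ((a.val : ℤ) + b.val - c.val - d.val = 0) → a + b = c + d := by
    intro a b c d hh
    have hh2 : ((a.val : ℤ) + b.val : ℤ) = (c.val : ℤ) + d.val := by linarith
    have hh3 := congrArg (Int.cast : ℤ → ZMod m) hh2
    push_cast at hh3
    simpa [ZMod.natCast_val, ZMod.cast_id] using hh3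
  exact Prod.ext (conv _ _ _ _ h1) (Prod.ext (conv _ _ _ _ h2) (conv _ _ _ _ h3))

/-- with `φ_m(x₁,x₂,x₃) = (2m)²x₁ + (2m)x₂ + x₃` (residues in `[0,m−1]`),
if `A ⊆ Z_m³` contains no sumset `L₁+L₂+L₃` with `|Lᵢ| = 2`, then `φ_m(A) ⊆ Z`
contains no such sumset either (no Hilbert cube of dimension 3). -/
theorem stmt11 (m : ℕ) (hm : 2 ≤ m) (A : Set (ZMod m × ZMod m × ZMod m))
    (hA : LFree 3 (fun _ => 2) A) :
    LFree 3 (fun _ => 2)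
      ((fun x : ZMod m × ZMod m × ZMod m =>
          ((2 * m : ℤ) ^ 2 * x.1.val + (2 * m : ℤ) * x.2.1.val + (x.2.2.val : ℤ))) '' A) := by
  have himg : ((fun x : ZMod m × ZMod m × ZMod m =>
      ((2 * m : ℤ) ^ 2 * x.1.val + (2 * m : ℤ) * x.2.1.val + (x.2.2.val : ℤ))) '' A)
      = phiM m '' A := rfl
  rw [himg]
  intro L hcard hsub
  obtain ⟨a0, b0, hab0, hL0⟩ := Finset.card_eq_two.mp (hcard 0)
  obtain ⟨a1, b1, hab1, hL1⟩ := Finset.card_eq_two.mp (hcard 1)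
  obtain ⟨a2, b2, hab2, hL2⟩ := Finset.card_eq_two.mp (hcard 2)
  have mem : ∀ p ∈ L 0, ∀ q ∈ L 1, ∀ r ∈ L 2, ∃ z ∈ A, phiM m z = p + q + r := by
    intro p hp q hq r hr
    have : p + q + r ∈ (↑(∑ i, L i) : Set ℤ) := by
      rw [Fin.sum_univ_three]
      exact_mod_cast Finset.add_mem_add (Finset.add_mem_add hp hq) hr
    exact hsub this
  have ma0 : a0 ∈ L 0 := by simp [hL0]
  have mb0 : b0 ∈ L 0 := by simp [hL0]
  have ma1 : a1 ∈ L 1 := by simp [hL1]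
  have mb1 : b1 ∈ L 1 := by simp [hL1]
  have ma2 : a2 ∈ L 2 := by simp [hL2]
  have mb2 : b2 ∈ L 2 := by simp [hL2]
  obtain ⟨x000, hA000, hx000⟩ := mem a0 ma0 a1 ma1 a2 ma2
  obtain ⟨x100, hA100, hx100⟩ := mem b0 mb0 a1 ma1 a2 ma2
  obtain ⟨x010, hA010, hx010⟩ := mem a0 ma0 b1 mb1 a2 ma2
  obtain ⟨x001, hA001, hx001⟩ := mem a0 ma0 a1 ma1 b2 mb2
  obtain ⟨x110, hA110, hx110⟩ := mem b0 mb0 b1 mb1 a2 ma2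
  obtain ⟨x101, hA101, hx101⟩ := mem b0 mb0 a1 ma1 b2 mb2
  obtain ⟨x011, hA011, hx011⟩ := mem a0 ma0 b1 mb1 b2 mb2
  obtain ⟨x111, hA111, hx111⟩ := mem b0 mb0 b1 mb1 b2 mb2
  set d1 := x100 - x000 with hd1
  set d2 := x010 - x000 with hd2
  set d3 := x001 - x000 with hd3
  have e110 : x110 = x000 + d1 + d2 := by
    have := freiman m hm (x := x110) (y := x000) (u := x100) (v := x010)
      (by rw [hx110, hx000, hx100, hx010]; ring)
    rw [hd1, hd2]; linear_combination this
  have e101 : x101 = x000 + d1 + d3 := by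
    have := freiman m hm (x := x101) (y := x000) (u := x100) (v := x001)
      (by rw [hx101, hx000, hx100, hx001]; ring)
    rw [hd1, hd3]; linear_combination this
  have e011 : x011 = x000 + d2 + d3 := by
    have := freiman m hm (x := x011) (y := x000) (u := x010) (v := x001)
      (by rw [hx011, hx000, hx010, hx001]; ring)
    rw [hd2, hd3]; linear_combination this
  have e111 : x111 = x000 + d1 + d2 + d3 := by
    have := freiman m hm (x := x111) (y := x000) (u := x110) (v := x001)
      (by rw [hx111, hx000, hx110, hx001]; ring)
    rw [e110] at this
    rw [hd3]; linear_combination this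
  have hd1ne : d1 ≠ 0 := by
    intro h
    have : x100 = x000 := by rw [hd1, sub_eq_zero] at h; exact h
    rw [this, hx000] at hx100
    exact hab0 (by linarith)
  have hd2ne : d2 ≠ 0 := by
    intro h
    have : x010 = x000 := by rw [hd2, sub_eq_zero] at h; exact h
    rw [this, hx000] at hx010
    exact hab1 (by linarith)
  have hd3ne : d3 ≠ 0 := by
    intro h
    have : x001 = x000 := by rw [hd3, sub_eq_zero] at h; exact h
    rw [this, hx000] at hx001
    exact hab2 (by linarith)
  set K : Fin 3 → Finset (ZMod m × ZMod m × ZMod m) :=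
    ![{x000, x000 + d1}, {0, d2}, {0, d3}] with hK
  apply hA K
  · intro i
    fin_cases i
    · exact Finset.card_pair (by intro h; exact hd1ne (by linear_combination h.symm))
    · exact Finset.card_pair (Ne.symm hd2ne)
    · exact Finset.card_pair (Ne.symm hd3ne)
  · intro t ht
    have ht' : t ∈ K 0 + K 1 + K 2 := by
      rw [← Fin.sum_univ_three K]
      exact_mod_cast ht
    rw [Finset.mem_add] at ht'
    obtain ⟨pq, hpq, r, hr, hpqr⟩ := ht'
    rw [Finset.mem_add] at hpq
    obtain ⟨p, hp, q, hq, hpq'⟩ := hpq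
    have hp' : p = x000 ∨ p = x000 + d1 := by simpa [hK] using hp
    have hq' : q = 0 ∨ q = d2 := by simpa [hK] using hq
    have hr' : r = 0 ∨ r = d3 := by simpa [hK] using hr
    subst hpqr
    subst hpq'
    rcases hp' with h1 | h1 <;> rcases hq' with h2 | h2 <;> rcases hr' with h3 | h3 <;>
        rw [h1, h2, h3]
    · simpa using hA000
    · have : x000 + 0 + d3 = x001 := by rw [hd3]; ring
      rw [this]; exact hA001
    · have : x000 + d2 + 0 = x010 := by rw [hd2]; ring
      rw [this]; exact hA010
    · have : x000 + d2 + d3 = x011 := by rw [e011]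
      rw [this]; exact hA011
    · have : x000 + d1 + 0 + 0 = x100 := by rw [hd1]; ring
      rw [this]; exact hA100
    · have : x000 + d1 + 0 + d3 = x101 := by rw [e101]; ring
      rw [this]; exact hA101
    · have : x000 + d1 + d2 + 0 = x110 := by rw [e110]; ring
      rw [this]; exact hA110
    · have : x000 + d1 + d2 + d3 = x111 := by rw [e111]
      rw [this]; exact hA111
end

section
/- Let F(G, L^{(r)}_{ℓ₁,…,ℓ_r}) denote the largest size of an L^{(r)}_{ℓ₁,…,ℓ_r}-free set in the finite abelian group G, and F(N, L^{(r)}_{ℓ₁,…,ℓ_r}) the analogous quantity for subsets of {1,…,N}. Then F(2^{k−1} n₁⋯n_k, L^{(r)}_{ℓ₁,…,ℓ_r}) ≥ F(Z_{n₁} × ⋯ × Z_{n_k}, L^{(r)}_{ℓ₁,…,ℓ_r}). -/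
open Pointwise

/-!
Reading the digits `(a i).val < nᵢ` in mixed radix with bases `2n₁, 2n₂, …` gives an injection
`φ : ℤ_{n₁} × ⋯ × ℤ_{n_k} → [1, 2^{k-1} n₁⋯n_k]` under which adding two codes never carries, so
`φ a + φ b = φ a' + φ b'` forces `a + b = a' + b'`: `φ⁻¹` is a Freiman 2-homomorphism on `φ(A)`.
If `L₁ + ⋯ + L_r ⊆ φ(A)`, then `m ↦ φ⁻¹(m₁ + ⋯ + m_r)` is a Freiman 2-homomorphism on the box
`L₁ × ⋯ × L_r`, hence a sum of functions of one coordinate each, each injective; their images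
are sets of sizes `ℓᵢ` whose sumset lies in `A`.
-/

open Finset

theorem IsAddFreimanHom.eq_add_sum_update_sub {ι H G : Type*} [Fintype ι] [DecidableEq ι]
    [AddCommMonoid H] [AddCommGroup G] {X : ι → Set H} {B : Set G} {g : (ι → H) → G}
    (hg : IsAddFreimanHom 2 (Set.univ.pi X) B g) {c x : ι → H} (hc : c ∈ Set.univ.pi X)
    (hx : x ∈ Set.univ.pi X) :
    g x = g c + ∑ j, (g (Function.update c j (x j)) - g c) := by
  suffices ∀ s : Finset ι,
      g (s.piecewise x c) = g c + ∑ j ∈ s, (g (Function.update c j (x j)) - g c) by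
    simpa using this univ
  intro s
  induction s using Finset.induction_on with
  | empty => simp
  | insert j s hj ih =>
    have hupd : Function.update c j (x j) ∈ Set.univ.pi X := by
      rw [← piecewise_singleton]; exact piecewise_mem_set_pi _ hx hc
    have hquad : (insert j s).piecewise x c + c = s.piecewise x c + Function.update c j (x j) := by
      ext t
      rcases eq_or_ne t j with rfl | htj
      · simp [hj, add_comm]
      · simp [Finset.piecewise, htj]
    have hstep :=
      hg.add_eq_add (piecewise_mem_set_pi _ hx hc) hc (piecewise_mem_set_pi _ hx hc) hupd hquad
    rw [sum_insert hj, eq_sub_of_add_eq hstep, ih]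
    abel

theorem isAddFreimanHom_invFunOn {α β : Type*} [AddCommMonoid α] [AddCommMonoid β] {A : Set α}
    {φ : α → β}
    (hφ : ∀ a ∈ A, ∀ b ∈ A, ∀ a' ∈ A, ∀ b' ∈ A, φ a + φ b = φ a' + φ b' → a + b = a' + b') :
    IsAddFreimanHom 2 (φ '' A) A (Function.invFunOn φ A) := by
  refine isAddFreimanHom_two.mpr ⟨fun _ hp => Function.invFunOn_mem hp, ?_⟩
  rintro _ ⟨a, ha, rfl⟩ _ ⟨b, hb, rfl⟩ _ ⟨a', ha', rfl⟩ _ ⟨b', hb', rfl⟩ h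
  refine hφ _ (Function.invFunOn_apply_mem ha) _ (Function.invFunOn_apply_mem hb) _
    (Function.invFunOn_apply_mem ha') _ (Function.invFunOn_apply_mem hb') ?_
  simpa only [Function.invFunOn_apply_eq ha, Function.invFunOn_apply_eq hb,
    Function.invFunOn_apply_eq ha', Function.invFunOn_apply_eq hb'] using h

theorem LFree.of_isAddFreimanHom {G H : Type*} [AddCommGroup G] [AddCommGroup H] [DecidableEq G]
    [DecidableEq H] {r : ℕ} {ℓ : Fin r → ℕ} (hr : r ≠ 0) (hℓ : ∀ i, 0 < ℓ i) {A : Set G}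
    {B : Set H} {ψ : H → G} (hψ : IsAddFreimanHom 2 B A ψ) (hψB : Set.InjOn ψ B)
    (hA : LFree r ℓ A) : LFree r ℓ B := by
  intro L hL hLB
  have : NeZero r := ⟨hr⟩
  set box := Set.univ.pi fun j => (L j : Set H)
  have hsum : Set.MapsTo (fun m : Fin r → H => ∑ j, m j) box B := fun m hm =>
    hLB (by rw [coe_sum, Set.mem_fintype_sum]; exact ⟨m, fun j => hm j trivial, rfl⟩)
  set g := fun m : Fin r → H => ψ (∑ j, m j)
  have hg : IsAddFreimanHom 2 box A g := hψ.comp <| isAddFreimanHom_two.mpr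
    ⟨hsum, fun u _ v _ u' _ v' _ h => by simp only [← sum_add_distrib, ← Pi.add_apply, h]⟩
  choose c hc using fun j => card_pos.mp ((hL j).symm ▸ hℓ j)
  have hcbox : c ∈ box := fun j _ => hc j
  have hupd : ∀ j, ∀ x ∈ L j, Function.update c j x ∈ box := fun j x hx =>
    (Set.update_mem_pi_iff_of_mem hcbox).mpr fun _ => hx
  refine hA (fun j => (L j).image fun x =>
    (Pi.single 0 (g c) : Fin r → G) j + (g (Function.update c j x) - g c)) (fun j => ?_) ?_
  · rw [card_image_of_injOn, hL]
    intro x hx y hy hxy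
    have hsum_eq : ∑ i, Function.update c j x i = ∑ i, Function.update c j y i :=
      hψB (hsum (hupd j x hx)) (hsum (hupd j y hy)) (sub_left_inj.mp (add_left_cancel hxy))
    rw [sum_update_of_mem (mem_univ j), sum_update_of_mem (mem_univ j)] at hsum_eq
    exact add_right_cancel hsum_eq
  · intro a ha
    rw [coe_sum, Set.mem_fintype_sum] at ha
    obtain ⟨b, hb, rfl⟩ := ha
    simp only [coe_image, Set.mem_image, mem_coe] at hb
    choose x hx hxb using hb
    have hxbox : x ∈ box := fun j _ => hx j
    rw [← funext hxb, sum_add_distrib, Fintype.sum_pi_single',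
      ← hg.eq_add_sum_update_sub hcbox hxbox]
    exact hg.mapsTo hxbox

namespace ZModPi

variable {k : ℕ} {n : Fin k → ℕ} [∀ i, NeZero (n i)]

def encode (a : ∀ i, ZMod (n i)) : ℕ :=
  ∑ i, (a i).val * ∏ j : Fin i, 2 * n (Fin.castLE i.is_lt.le j)

def digitSum (a b : ∀ i, ZMod (n i)) : ∀ i, Fin (2 * n i) := fun i =>
  ⟨(a i).val + (b i).val, by have := (a i).val_lt; have := (b i).val_lt; omega⟩

theorem encode_add_encode (a b : ∀ i, ZMod (n i)) :
    encode a + encode b = finPiFinEquiv (digitSum a b) := by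
  simp only [encode, finPiFinEquiv_apply, digitSum, ← sum_add_distrib, add_mul]

theorem add_eq_add_of_encode_add_encode_eq {a b a' b' : ∀ i, ZMod (n i)}
    (h : encode a + encode b = encode a' + encode b') : a + b = a' + b' := by
  rw [encode_add_encode, encode_add_encode, Fin.val_inj, finPiFinEquiv.apply_eq_iff_eq] at h
  funext i
  have hi : (a i).val + (b i).val = (a' i).val + (b' i).val := congrArg Fin.val (congrFun h i)
  simpa using congrArg (Nat.cast : ℕ → ZMod (n i)) hi

theorem encode_injective : Function.Injective (encode (n := n)) := fun a b h => by
  simpa using add_eq_add_of_encode_add_encode_eq (b := 0) (b' := 0) (congrArg (· + encode 0) h)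

theorem encode_lt (a : ∀ i, ZMod (n i)) : encode a < 2 ^ (k - 1) * ∏ i, n i := by
  have hdouble : 2 * encode a < 2 ^ k * ∏ i, n i := by
    rw [two_mul, encode_add_encode]
    simpa [prod_mul_distrib] using (finPiFinEquiv (digitSum a a)).isLt
  have hpow : 2 ^ k ≤ 2 * 2 ^ (k - 1) := by
    rw [← pow_succ']; exact Nat.pow_le_pow_right two_pos (by omega)
  linarith [Nat.mul_le_mul_right (∏ i, n i) hpow]

end ZModPi

theorem stmt12_general (k : ℕ) (n : Fin k → ℕ) (hn : ∀ i, 0 < n i)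
    (r : ℕ) (hr : 2 ≤ r) (ℓ : Fin r → ℕ) (hℓ : ∀ i, 2 ≤ ℓ i) :
    Fgrp (∀ i, ZMod (n i)) r ℓ ≤ Ffin (2 ^ (k - 1) * ∏ i, n i) r ℓ := by
  have : ∀ i, NeZero (n i) := fun i => ⟨(hn i).ne'⟩
  set N := 2 ^ (k - 1) * ∏ i, n i
  have hbdd : BddAbove {m | ∃ B : Finset ℤ,
      (B : Set ℤ) ⊆ Set.Icc 1 (N : ℤ) ∧ LFree r ℓ (B : Set ℤ) ∧ B.card = m} := by
    refine ⟨(Icc (1 : ℤ) N).card, ?_⟩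
    rintro _ ⟨B, hB, -, rfl⟩
    exact card_le_card (by rwa [← coe_subset, coe_Icc])
  refine csSup_le' ?_
  rintro _ ⟨A, hA, rfl⟩
  set φ : (∀ i, ZMod (n i)) → ℤ := fun a => ZModPi.encode a + 1
  refine le_csSup hbdd ⟨A.image φ, ?_, ?_, card_image_of_injective A ?_⟩
  · intro _ hb
    obtain ⟨a, -, rfl⟩ := mem_image.mp hb
    have := ZModPi.encode_lt a
    simp only [φ, Set.mem_Icc]
    omega
  · rw [coe_image]
    refine hA.of_isAddFreimanHom (by omega) (fun i => by have := hℓ i; omega)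
      (isAddFreimanHom_invFunOn fun a _ b _ a' _ b' _ h => ?_) (Function.invFunOn_injOn_image φ _)
    exact ZModPi.add_eq_add_of_encode_add_encode_eq (by simp only [φ] at h; omega)
  · exact fun a b h => ZModPi.encode_injective (by simp only [φ] at h; omega)

/-- `F(2^{k−1} n₁⋯n_k, L^{(r)}_{ℓ₁,…,ℓ_r}) ≥
F(Z_{n₁} × ⋯ × Z_{n_k}, L^{(r)}_{ℓ₁,…,ℓ_r})`. -/
theorem stmt12 (k : ℕ) (n : Fin k → ℕ) (hn : ∀ i, 0 < n i)
    (r : ℕ) (hr : 2 ≤ r) (ℓ : Fin r → ℕ) (hℓ : ∀ i, 2 ≤ ℓ i) (hmono : Monotone ℓ) :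
    Fgrp (∀ i, ZMod (n i)) r ℓ ≤ Ffin (2 ^ (k - 1) * ∏ i, n i) r ℓ :=
  stmt12_general k n hn r hr ℓ hℓ
end

section
/- Let G be a finite abelian group with |G| = n. Then ex(n, K^{(r)}_{ℓ₁,…,ℓ_r}) ≥ binom(n, r) · F(G, L^{(r)}_{ℓ₁,…,ℓ_r}) / n. -/
/-!
Transport a largest `L`-free set `A ⊆ G` to a hypergraph: fixing a bijection `Fin n ≃ G`, let the
edges be the `r`-sets whose elements sum into a translate `g + A`. A copy of `K_{ℓ₁,…,ℓ_r}` has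
disjoint parts `L₁, …, L_r`, so every transversal is an `r`-set and `L₁ + ⋯ + L_r ⊆ g + A`,
which is impossible since translates of `L`-free sets are `L`-free (shift one of the `Lᵢ`).
Every `r`-set sums into exactly `|A|` of the `n` translates, so averaging over `g` gives a
translate whose hypergraph has at least `binom(n, r) · |A| / n` edges.
-/

open Pointwise

/-- An edge set `E` of an `r`-uniform hypergraph on `Fin n` is
`K^{(r)}_{ℓ₁,…,ℓ_r}`-free. -/
def KFree (n r : ℕ) (ℓ : Fin r → ℕ) (E : Finset (Finset (Fin n))) : Prop :=
  ¬ ∃ L : Fin r → Finset (Fin n), (∀ i, (L i).card = ℓ i) ∧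
      (∀ i j, i ≠ j → Disjoint (L i) (L j)) ∧
      ∀ x : Fin r → Fin n, (∀ i, x i ∈ L i) → Finset.image x Finset.univ ∈ E

/-- `ex(n, K^{(r)}_{ℓ₁,…,ℓ_r})`: the maximum number of hyperedges of a
`K^{(r)}_{ℓ₁,…,ℓ_r}`-free `r`-uniform hypergraph on `n` vertices. -/
noncomputable def exK (n r : ℕ) (ℓ : Fin r → ℕ) : ℕ :=
  sSup {k | ∃ E : Finset (Finset (Fin n)),
    (∀ e ∈ E, e.card = r) ∧ KFree n r ℓ E ∧ E.card = k}

open Finset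

section

variable {G : Type*} [AddCommGroup G] [DecidableEq G] {r : ℕ} {ℓ : Fin r → ℕ}

lemma Finset.sum_update_vadd {ι : Type*} [DecidableEq ι] [Fintype ι] (L : ι → Finset G) (i : ι)
    (g : G) : ∑ j, Function.update L i (g +ᵥ L i) j = g +ᵥ ∑ j, L j := by
  rw [sum_update_of_mem (mem_univ i), ← add_sum_erase _ _ (mem_univ i), vadd_add_assoc,
    sdiff_singleton_eq_erase]

lemma LFree.vadd (hr : 0 < r) {A : Set G} (hA : LFree r ℓ A) (g : G) : LFree r ℓ (g +ᵥ A) := by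
  intro L hL hsub
  let i₀ : Fin r := ⟨0, hr⟩
  refine hA (Function.update L i₀ (-g +ᵥ L i₀)) (fun i => ?_) ?_
  · rcases eq_or_ne i i₀ with rfl | hi
    · rw [Function.update_self, card_vadd_finset, hL]
    · rw [Function.update_of_ne hi, hL]
  · rw [sum_update_vadd, coe_vadd_finset, ← neg_vadd_vadd g A]
    exact Set.vadd_set_mono hsub

lemma exists_lFree_card_eq_Fgrp [Fintype G] (h : Fgrp G r ℓ ≠ 0) :
    ∃ A : Finset G, LFree r ℓ (A : Set G) ∧ #A = Fgrp G r ℓ := by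
  obtain hS | hS := Set.eq_empty_or_nonempty {k | ∃ A : Finset G, LFree r ℓ (A : Set G) ∧ #A = k}
  · simp [Fgrp, hS] at h
  · exact Nat.sSup_mem hS ⟨Fintype.card G, fun k ⟨A, _, hA⟩ => hA ▸ card_le_univ A⟩

lemma card_filter_mem_vadd [Fintype G] (x : G) (A : Finset G) : #{g : G | x ∈ g +ᵥ A} = #A := by
  have : ({g : G | x ∈ g +ᵥ A} : Finset G) = A.image (x - ·) := by
    ext g
    simp only [mem_filter, mem_univ, true_and, mem_vadd_finset, mem_image, vadd_eq_add,
      sub_eq_iff_eq_add]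
    simp [eq_comm]
  rw [this, card_image_of_injective _ sub_right_injective]

lemma sum_card_filter_mem_vadd [Fintype G] {ι : Type*} (T : Finset ι) (σ : ι → G)
    (A : Finset G) : ∑ g : G, #{i ∈ T | σ i ∈ g +ᵥ A} = #T * #A := by
  simp_rw [card_filter]
  rw [sum_comm]
  simp_rw [← card_filter, card_filter_mem_vadd, sum_const, smul_eq_mul]

lemma exists_card_mul_le_card_mul_card_filter_mem_vadd [Fintype G] {ι : Type*}
    (T : Finset ι) (σ : ι → G) (A : Finset G) :
    ∃ g : G, #T * #A ≤ Fintype.card G * #{i ∈ T | σ i ∈ g +ᵥ A} := by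
  have hsum : ∑ _g : G, #T * #A = ∑ g : G, Fintype.card G * #{i ∈ T | σ i ∈ g +ᵥ A} := by
    rw [sum_const, card_univ, smul_eq_mul, ← mul_sum, sum_card_filter_mem_vadd]
  obtain ⟨g, -, hg⟩ := exists_le_of_sum_le univ_nonempty hsum.le
  exact ⟨g, hg⟩

def sumHypergraph {n : ℕ} (r : ℕ) (e : Fin n ↪ G) (B : Finset G) : Finset (Finset (Fin n)) :=
  {S ∈ powersetCard r univ | ∑ v ∈ S, e v ∈ B}

lemma card_of_mem_sumHypergraph {n : ℕ} {e : Fin n ↪ G} {B : Finset G} {S : Finset (Fin n)}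
    (hS : S ∈ sumHypergraph r e B) : #S = r :=
  (mem_powersetCard.1 (mem_filter.1 hS).1).2

lemma kFree_sumHypergraph {n : ℕ} (e : Fin n ↪ G) {B : Finset G} (hB : LFree r ℓ (B : Set G)) :
    KFree n r ℓ (sumHypergraph r e B) := by
  rintro ⟨L, hL, hdisj, hedge⟩
  refine hB (fun i => (L i).map e) (fun i => by rw [card_map, hL]) fun y hy => ?_
  rw [coe_sum, Set.mem_fintype_sum] at hy
  obtain ⟨y', hy', rfl⟩ := hy
  choose x hx hxy using fun i => mem_map.1 (hy' i)
  have hinj : Function.Injective x := fun i j hij =>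
    by_contra fun hne => disjoint_left.1 (hdisj i j hne) (hx i) (hij ▸ hx j)
  have hsum := (mem_filter.1 (hedge x hx)).2
  rwa [sum_image fun i _ j _ h => hinj h, Fintype.sum_congr _ _ hxy] at hsum

lemma card_le_exK {n : ℕ} {E : Finset (Finset (Fin n))} (hE : ∀ S ∈ E, #S = r)
    (hK : KFree n r ℓ E) : #E ≤ exK n r ℓ :=
  le_csSup ⟨_, fun _ ⟨E, _, _, hE⟩ => hE ▸ card_le_univ E⟩ ⟨E, hE, hK, rfl⟩

end

theorem stmt14_general (G : Type*) [AddCommGroup G] [Fintype G] [DecidableEq G]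
    (r : ℕ) (hr : 2 ≤ r) (ℓ : Fin r → ℕ)
    (n : ℕ) (hn : Fintype.card G = n) :
    ((n.choose r : ℝ)) * (Fgrp G r ℓ : ℝ) / (n : ℝ) ≤ (exK n r ℓ : ℝ) := by
  rcases eq_or_ne (Fgrp G r ℓ) 0 with hF | hF
  · simp [hF]
  obtain ⟨A, hA, hAcard⟩ := exists_lFree_card_eq_Fgrp hF
  let e : Fin n ↪ G := (Fintype.equivFinOfCardEq hn).symm.toEmbedding
  obtain ⟨g, hg⟩ := exists_card_mul_le_card_mul_card_filter_mem_vadd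
    (powersetCard r univ) (fun S => ∑ v ∈ S, e v) A
  have hE := card_le_exK (fun _ => card_of_mem_sumHypergraph)
    (kFree_sumHypergraph e (B := g +ᵥ A) (by rw [coe_vadd_finset]; exact hA.vadd (by omega) g))
  rw [card_powersetCard, card_univ, Fintype.card_fin, hAcard, hn] at hg
  refine div_le_of_le_mul₀ (Nat.cast_nonneg _) (Nat.cast_nonneg _) ?_
  exact_mod_cast hg.trans ((Nat.mul_le_mul_left n hE).trans_eq (mul_comm _ _))

/-- for a finite abelian group `G` of order `n`,
`ex(n, K^{(r)}_{ℓ₁,…,ℓ_r}) ≥ binom(n, r) · F(G, L^{(r)}_{ℓ₁,…,ℓ_r}) / n`. -/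
theorem stmt14 (G : Type*) [AddCommGroup G] [Fintype G] [DecidableEq G]
    (r : ℕ) (hr : 2 ≤ r) (ℓ : Fin r → ℕ) (hℓ : ∀ i, 2 ≤ ℓ i) (hmono : Monotone ℓ)
    (n : ℕ) (hn : Fintype.card G = n) :
    ((n.choose r : ℝ)) * (Fgrp G r ℓ : ℝ) / (n : ℝ) ≤ (exK n r ℓ : ℝ) :=
  stmt14_general G r hr ℓ n hn
end
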